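/- arXiv:cs/0608092 — 3 statements merged into one kernel-verified Lean document; each statement's English description precedes it below -/
import Mathlib

section
/- Let n be a natural number and let ℓ, L be real numbers with ℓ > 0 and L > (2n+1)·ℓ. Then for every family a₁, …, aₙ of real numbers there exists a real number t with 0 ≤ t and t + ℓ ≤ L such that the closed interval [t, t+ℓ] is disjoint from every closed interval [aᵢ, aᵢ+ℓ], i = 1, …, n. -/
/-!
Place `n + 1` candidate windows at the points `k * d`, `k = 0, …, n`, with a spacing `d > 2ℓ`
small enough that the last one still ends before `L`; this is possible exactly because
`L > (2n + 1)ℓ`. A window `[s, s + ℓ]` can only meet `[a, a + ℓ]` when `|s - a| ≤ ℓ`, and two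
candidates more than `2ℓ` apart cannot both be that close to the same `a`. So each of the `n`
blocked windows rules out at most one candidate, and by pigeonhole one candidate stays free.
-/

open Set

theorem exists_forall_lt_dist_of_card_lt {ι κ X : Type*} [Fintype ι] [Fintype κ]
    [PseudoMetricSpace X] {p : κ → X} {a : ι → X} {r : ℝ}
    (hcard : Fintype.card ι < Fintype.card κ)
    (hp : Pairwise fun k k' => 2 * r < dist (p k) (p k')) :
    ∃ k, ∀ i, r < dist (p k) (a i) := by
  by_contra! hclose
  choose g hg using hclose
  obtain ⟨k, k', hne, hgk⟩ := Fintype.exists_ne_map_eq_of_card_lt g hcard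
  have := dist_triangle_right (p k) (p k') (a (g k))
  linarith [hp hne, hg k, hgk ▸ hg k']

theorem le_abs_natCast_mul_sub_natCast_mul {𝕜 : Type*} [Field 𝕜] [LinearOrder 𝕜]
    [IsStrictOrderedRing 𝕜] {j k : ℕ} (hjk : j ≠ k) {d : 𝕜} (hd : 0 ≤ d) :
    d ≤ |j * d - k * d| := by
  rw [← sub_mul, abs_mul, abs_of_nonneg hd]
  refine le_mul_of_one_le_left hd ?_
  have : (j - k : 𝕜) = ((j - k : ℤ) : 𝕜) := by push_cast; ring
  rw [this, ← Int.cast_abs, ← Int.cast_one, Int.cast_le]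
  exact Int.one_le_abs (sub_ne_zero.mpr (by exact_mod_cast hjk))

theorem disjoint_Icc_add_of_lt_abs_sub {𝕜 : Type*} [Field 𝕜] [LinearOrder 𝕜]
    [IsStrictOrderedRing 𝕜] {s a ℓ : 𝕜} (h : ℓ < |s - a|) :
    Disjoint (Icc s (s + ℓ)) (Icc a (a + ℓ)) := by
  rw [Set.disjoint_left]
  rintro x ⟨hsx, hxs⟩ ⟨hax, hxa⟩
  rcases lt_abs.mp h with h | h <;> linarith

theorem interval_gap_principle (n : ℕ) (ℓ L : ℝ) (hℓ : ℓ > 0)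
    (hL : L > (2 * n + 1) * ℓ) (a : Fin n → ℝ) :
    ∃ t : ℝ, 0 ≤ t ∧ t + ℓ ≤ L ∧
      ∀ i : Fin n, Disjoint (Set.Icc t (t + ℓ)) (Set.Icc (a i) (a i + ℓ)) := by
  set d := 2 * ℓ + (L - (2 * n + 1) * ℓ) / (n + 1)
  have hd : 2 * ℓ < d := lt_add_of_pos_right _ (div_pos (sub_pos.mpr hL) (by positivity))
  have hnd : n * d + ℓ ≤ L := by
    have : n * ((L - (2 * n + 1) * ℓ) / (n + 1)) ≤ L - (2 * n + 1) * ℓ := by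
      rw [mul_div_assoc']
      exact div_le_of_le_mul₀ (by positivity) (by linarith) (by linarith)
    linarith
  obtain ⟨k, hk⟩ := exists_forall_lt_dist_of_card_lt (p := fun k : Fin (n + 1) => (k : ℝ) * d)
    (a := a) (r := ℓ) (by simp) fun j k hjk =>
      hd.trans_le (le_abs_natCast_mul_sub_natCast_mul (Fin.val_injective.ne hjk) (by linarith))
  have hkn : (k : ℝ) ≤ n := by exact_mod_cast Nat.le_of_lt_succ k.isLt
  refine ⟨k * d, by positivity, ?_, fun i => disjoint_Icc_add_of_lt_abs_sub (hk i)⟩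
  calc k * d + ℓ ≤ n * d + ℓ := by gcongr
    _ ≤ L := hnd
end

section
/- Let d > 0 be a real number, f a natural number, and Cycle a real number with Cycle > (10f+16)·d, and let t₁ ∈ ℝ. Suppose S ⊆ ℝ is a set of real numbers (recording times) such that S ⊆ B₁ ∪ ⋯ ∪ B_f, where each Bᵢ ⊆ ℝ has diameter at most 5d (i.e., |x − y| ≤ 5d for all x, y ∈ Bᵢ). Then there exists a real number t₂ with t₁ ≤ t₂ and t₂ + 5d ≤ t₁ + Cycle − 11d such that the closed interval [t₂, t₂ + 5d] contains no point of S. -/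
theorem recording_time_free_window (d : ℝ) (hd : d > 0) (f : ℕ) (Cycle : ℝ)
    (hC : Cycle > (10 * f + 16) * d) (t₁ : ℝ) (S : Set ℝ) (B : Fin f → Set ℝ)
    (hS : S ⊆ ⋃ i : Fin f, B i)
    (hdiam : ∀ i : Fin f, ∀ x ∈ B i, ∀ y ∈ B i, |x - y| ≤ 5 * d) :
    ∃ t₂ : ℝ, t₁ ≤ t₂ ∧ t₂ + 5 * d ≤ t₁ + Cycle - 11 * d ∧
      ∀ x ∈ S, x ∉ Set.Icc t₂ (t₂ + 5 * d) := by
  by_contra h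
  push_neg at h
  rcases Nat.eq_zero_or_pos f with hf | hf
  · subst hf
    obtain ⟨x, hxS, -⟩ := h t₁ le_rfl (by push_cast at hC; linarith)
    have := hS hxS
    simp at this
  · have hfR : (0:ℝ) < f := by exact_mod_cast hf
    set s : ℝ := (Cycle - 16 * d) / f with hs_def
    have hs : s > 10 * d := by
      rw [hs_def, gt_iff_lt, lt_div_iff₀ hfR]
      push_cast at hC ⊢
      linarith
    have key : ∀ k : Fin (f + 1), ∃ i : Fin f, ∃ x, x ∈ B i ∧
        x ∈ Set.Icc (t₁ + k * s) (t₁ + k * s + 5 * d) := by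
      intro k
      have hk0 : (0:ℝ) ≤ (k:ℝ) := by positivity
      have hkf : (k:ℝ) ≤ (f:ℝ) := by
        exact_mod_cast Nat.lt_succ_iff.mp k.isLt
      have h1 : t₁ ≤ t₁ + k * s := by nlinarith
      have h2 : t₁ + k * s + 5 * d ≤ t₁ + Cycle - 11 * d := by
        have : (k:ℝ) * s ≤ (f:ℝ) * s := by nlinarith
        have hfs : (f:ℝ) * s = Cycle - 16 * d := by
          rw [hs_def]; field_simp [hfR.ne']
        linarith
      obtain ⟨x, hxS, hxI⟩ := h _ h1 h2
      obtain ⟨i, hxB⟩ := by simpa using hS hxS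
      exact ⟨i, x, hxB, hxI⟩
    choose g x hB hI using key
    obtain ⟨k, l, hne, heq⟩ := Fintype.exists_ne_map_eq_of_card_lt g (by simp)
    wlog hkl : k < l generalizing k l
    · exact this l k hne.symm heq.symm (hne.lt_or_gt.resolve_left hkl)
    have hdd := hdiam (g k) (x k) (hB k) (x l) (heq ▸ hB l)
    have h1 : (k:ℝ) + 1 ≤ (l:ℝ) := by exact_mod_cast Nat.succ_le_of_lt hkl
    have hIk := hI k
    have hIl := hI l
    simp only [Set.mem_Icc] at hIk hIl
    rw [abs_le] at hdd
    nlinarith [hdd.1, hIk.1, hIk.2, hIl.1, hIl.2]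
end

section
/- Let n be a natural number, let L be a real number, and let I₁, …, Iₙ be closed intervals Iᵢ = [aᵢ, aᵢ + ℓᵢ] in ℝ with ℓᵢ ≥ 0 for each i, and suppose L > ℓ₁ + ⋯ + ℓₙ. Set g = (L − (ℓ₁ + ⋯ + ℓₙ))/(n+1). Then there exists a real number t with 0 ≤ t and t + g ≤ L such that the open interval (t, t + g) is disjoint from every Iᵢ. -/
/-!
Generalise to a window `[u, v]` and an arbitrary gap length `g ≥ 0` with
`(n + 1) g + Σ ℓᵢ ≤ v - u`, and induct on the intervals from the leftmost one, `I₀`.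
If `I₀` starts at least `g` to the right of `u`, the gap `(u, u + g)` works. Otherwise
`I₀` ends before `u + g + ℓ₀`, so restricting to the window to the right of `I₀` loses
at most `g + ℓ₀` of length, which is exactly the budget freed by dropping `I₀`.
-/

open Finset Set

section LinearOrder

variable {α : Type*} [LinearOrder α] {t t' x y : α}

lemma disjoint_Ioo_Icc_of_le_left (h : t' ≤ x) : Disjoint (Ioo t t') (Icc x y) :=
  Set.disjoint_left.mpr fun _ hz hz' => (hz.2.trans_le h).not_ge hz'.1

lemma disjoint_Ioo_Icc_of_le_right (h : y ≤ t) : Disjoint (Ioo t t') (Icc x y) :=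
  Set.disjoint_left.mpr fun _ hz hz' => (h.trans_lt hz.1).not_ge hz'.2

end LinearOrder

theorem exists_Ioo_disjoint_Icc_of_card_mul_add_sum_le {ι : Type*} (a ℓ : ι → ℝ)
    (s : Finset ι) (hℓ : ∀ i ∈ s, 0 ≤ ℓ i) {u v g : ℝ} (hg : 0 ≤ g)
    (h : (#s + 1) * g + ∑ i ∈ s, ℓ i ≤ v - u) :
    ∃ t, u ≤ t ∧ t + g ≤ v ∧ ∀ i ∈ s, Disjoint (Ioo t (t + g)) (Icc (a i) (a i + ℓ i)) := by
  classical
  induction s using Finset.induction_on_min_value a generalizing u with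
  | empty => exact ⟨u, le_rfl, by simp at h; linarith, by simp⟩
  | insert i₀ s hi₀ hmin ih =>
    rw [card_insert_of_notMem hi₀, sum_insert hi₀] at h
    have hℓ₀ : 0 ≤ ℓ i₀ := hℓ i₀ (mem_insert_self i₀ s)
    have hsum : 0 ≤ ∑ i ∈ s, ℓ i := sum_nonneg fun i hi => hℓ i (mem_insert_of_mem hi)
    have hcard : 0 ≤ (#s : ℝ) * g := by positivity
    push_cast at h
    by_cases hleft : u + g ≤ a i₀
    · refine ⟨u, le_rfl, by linarith, ?_⟩
      exact forall_mem_insert _ _ _ |>.mpr ⟨disjoint_Ioo_Icc_of_le_left hleft,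
        fun i hi => disjoint_Ioo_Icc_of_le_left (hleft.trans (hmin i hi))⟩
    · set r := max u (a i₀ + ℓ i₀)
      have hr : r ≤ u + g + ℓ i₀ := max_le (by linarith) (by linarith)
      obtain ⟨t, hrt, htv, hdisj⟩ := ih (fun i hi => hℓ i (mem_insert_of_mem hi))
        (u := r) (by linarith)
      refine ⟨t, (le_max_left _ _).trans hrt, htv, ?_⟩
      exact forall_mem_insert _ _ _ |>.mpr
        ⟨disjoint_Ioo_Icc_of_le_right ((le_max_right _ _).trans hrt), hdisj⟩

theorem quantitative_gap_bound (n : ℕ) (L : ℝ) (a ℓ : Fin n → ℝ)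
    (hℓ : ∀ i : Fin n, ℓ i ≥ 0) (hL : L > ∑ i : Fin n, ℓ i) :
    ∃ t : ℝ, 0 ≤ t ∧ t + (L - ∑ i : Fin n, ℓ i) / (n + 1) ≤ L ∧
      ∀ i : Fin n,
        Disjoint (Set.Ioo t (t + (L - ∑ i : Fin n, ℓ i) / (n + 1)))
          (Set.Icc (a i) (a i + ℓ i)) := by
  have hg : 0 ≤ (L - ∑ i, ℓ i) / (n + 1) := div_nonneg (by linarith) (by positivity)
  have hbudget : (#(univ : Finset (Fin n)) + 1) * ((L - ∑ i, ℓ i) / (n + 1)) + ∑ i, ℓ i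
      ≤ L - 0 := by
    rw [card_univ, Fintype.card_fin, mul_div_cancel₀ _ (by positivity)]
    linarith
  obtain ⟨t, ht, htL, hdisj⟩ :=
    exists_Ioo_disjoint_Icc_of_card_mul_add_sum_le a ℓ univ (fun i _ => hℓ i) hg hbudget
  exact ⟨t, ht, htL, fun i => hdisj i (mem_univ i)⟩
end
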